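/- For positive integers a and r, there exists a real number η with ε_a < η < ε_{a+r} such that ∑_{i=0}^{r} 1/(a+i)² = (r+1)/((a + r + 1 - η)(a - η)). -/

import Mathlib

/-!
Since `ε_x` solves `(x - ε)(x + 1 - ε) = x²`, one gets `(y - ε_x)(y + 1 - ε_x) ≷ y²` according
as `y ≷ x`. The terms `1 / ((a + i - η)(a + i + 1 - η))` telescope to
`(r + 1) / ((a + r + 1 - η)(a - η))`, so comparing them termwise with `1 / (a + i)²` shows that
this expression lies below the sum at `η = ε_a` and above it at `η = ε_{a+r}`; the intermediate
value theorem then produces `η`.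
-/

open Finset

noncomputable def eps (x : ℝ) : ℝ := (2 * x + 1 - √(4 * x ^ 2 + 1)) / 2

lemma two_mul_lt_sqrt (x : ℝ) : 2 * x < √(4 * x ^ 2 + 1) :=
  calc 2 * x ≤ |2 * x| := le_abs_self _
    _ = √((2 * x) ^ 2) := (Real.sqrt_sq_eq_abs _).symm
    _ < √(4 * x ^ 2 + 1) := Real.sqrt_lt_sqrt (sq_nonneg _) (by linarith)

lemma eps_strictMono : StrictMono eps := by
  intro x y hxy
  have hx := two_mul_lt_sqrt x
  have hy := two_mul_lt_sqrt y
  have h1 := Real.sq_sqrt (by positivity : (0:ℝ) ≤ 4 * x ^ 2 + 1)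
  have h2 := Real.sq_sqrt (by positivity : (0:ℝ) ≤ 4 * y ^ 2 + 1)
  have hpos := Real.sqrt_pos.2 (by positivity : (0:ℝ) < 4 * x ^ 2 + 1)
  unfold eps
  -- With `A = 4x² + 1`, `B = 4y² + 1`: `√B - √A = 4 (y² - x²) / (√A + √B) < 2 (y - x)`.
  nlinarith [mul_pos (sub_pos.2 hxy)
    (by linarith : 0 < √(4 * x ^ 2 + 1) + √(4 * y ^ 2 + 1) - 2 * x - 2 * y)]

lemma eps_lt_half (x : ℝ) : eps x < 1 / 2 := by
  have := two_mul_lt_sqrt x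
  unfold eps; linarith

lemma eps_lt_self {x : ℝ} (hx : x ≠ 0) : eps x < x := by
  have : 1 < √(4 * x ^ 2 + 1) := by
    rw [Real.lt_sqrt zero_le_one]
    have := pow_pos (abs_pos.2 hx) 2
    rw [sq_abs] at this
    linarith
  unfold eps; linarith

lemma eps_quadratic (x : ℝ) : eps x ^ 2 - (2 * x + 1) * eps x + x = 0 := by
  have := Real.sq_sqrt (by positivity : (0:ℝ) ≤ 4 * x ^ 2 + 1)
  unfold eps; linear_combination this / 4

lemma sub_eps_mul (x y : ℝ) :
    (y - eps x) * (y + 1 - eps x) = y ^ 2 + (y - x) * (1 - 2 * eps x) := by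
  linear_combination eps_quadratic x

lemma sq_le_sub_eps_mul {x y : ℝ} (h : x ≤ y) : y ^ 2 ≤ (y - eps x) * (y + 1 - eps x) := by
  rw [sub_eps_mul]
  nlinarith [eps_lt_half x]

lemma sq_lt_sub_eps_mul {x y : ℝ} (h : x < y) : y ^ 2 < (y - eps x) * (y + 1 - eps x) := by
  rw [sub_eps_mul]
  nlinarith [eps_lt_half x]

lemma sub_eps_mul_le_sq {x y : ℝ} (h : y ≤ x) : (y - eps x) * (y + 1 - eps x) ≤ y ^ 2 := by
  rw [sub_eps_mul]
  nlinarith [eps_lt_half x]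

lemma sub_eps_mul_lt_sq {x y : ℝ} (h : y < x) : (y - eps x) * (y + 1 - eps x) < y ^ 2 := by
  rw [sub_eps_mul]
  nlinarith [eps_lt_half x]

lemma sum_range_one_div_sub_mul {a ε : ℝ} (hε : ε < a) (n : ℕ) :
    ∑ i ∈ range n, 1 / ((a + i - ε) * (a + i + 1 - ε)) = n / ((a + n - ε) * (a - ε)) := by
  induction n with
  | zero => simp
  | succ n ih =>
    have h₀ : a - ε ≠ 0 := by linarith
    have h₁ : a + n - ε ≠ 0 := by linarith [n.cast_nonneg (α := ℝ)]
    have h₂ : a + n + 1 - ε ≠ 0 := by linarith [n.cast_nonneg (α := ℝ)]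
    rw [sum_range_succ, ih, Nat.cast_succ, ← add_assoc]
    field_simp
    ring

lemma div_lt_sum_one_div_sq {a : ℝ} (ha : 0 < a) {r : ℕ} (hr : 0 < r) :
    (r + 1) / ((a + r + 1 - eps a) * (a - eps a)) < ∑ i ∈ range (r + 1), 1 / (a + i) ^ 2 := by
  have hε : eps a < a := eps_lt_self ha.ne'
  have := sum_range_one_div_sub_mul hε (r + 1)
  rw [Nat.cast_succ, ← add_assoc] at this
  rw [← this]
  refine sum_lt_sum (fun i _ ↦ ?_) ⟨r, self_mem_range_succ r, ?_⟩
  · exact one_div_le_one_div_of_le (by positivity) (sq_le_sub_eps_mul (by simp))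
  · exact one_div_lt_one_div_of_lt (by positivity) (sq_lt_sub_eps_mul (by simpa using hr))

lemma sum_one_div_sq_lt_div {a : ℝ} (ha : 1 / 2 ≤ a) {r : ℕ} (hr : 0 < r) :
    ∑ i ∈ range (r + 1), 1 / (a + i) ^ 2
      < (r + 1) / ((a + r + 1 - eps (a + r)) * (a - eps (a + r))) := by
  have hε : eps (a + r) < a := (eps_lt_half _).trans_le ha
  have := sum_range_one_div_sub_mul hε (r + 1)
  rw [Nat.cast_succ, ← add_assoc] at this
  rw [← this]
  refine sum_lt_sum (fun i hi ↦ ?_) ⟨0, by simp, ?_⟩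
  · have hpos : 0 < (a + i - eps (a + r)) * (a + i + 1 - eps (a + r)) := by
      have : eps (a + r) < a + i := hε.trans_le (by simp)
      nlinarith
    refine one_div_le_one_div_of_le hpos (sub_eps_mul_le_sq ?_)
    have : (i : ℝ) ≤ r := by exact_mod_cast Nat.lt_succ_iff.mp (mem_range.mp hi)
    linarith
  · have hpos : 0 < (a - eps (a + r)) * (a + 1 - eps (a + r)) := by nlinarith
    simpa using one_div_lt_one_div_of_lt hpos (sub_eps_mul_lt_sq (by simpa using hr))

theorem stmt_4 (a r : ℕ) (ha : 0 < a) (hr : 0 < r) :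
    ∃ η : ℝ,
      ((2 * a + 1 : ℝ) - Real.sqrt (4 * a ^ 2 + 1)) / 2 < η ∧
      η < ((2 * (a + r : ℕ) + 1 : ℝ) - Real.sqrt (4 * (a + r : ℕ) ^ 2 + 1)) / 2 ∧
      ∑ i ∈ Finset.range (r + 1), 1 / ((a : ℝ) + i) ^ 2
        = (r + 1 : ℝ) / (((a : ℝ) + r + 1 - η) * ((a : ℝ) - η)) := by
  have ha' : (1 : ℝ) ≤ a := by exact_mod_cast ha
  have hr' : (0 : ℝ) < r := by exact_mod_cast hr
  have hcont : ContinuousOn (fun η : ℝ ↦ (r + 1 : ℝ) / ((a + r + 1 - η) * (a - η)))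
      (Set.Icc (eps a) (eps (a + r))) := by
    refine continuousOn_const.div (by fun_prop) fun η hη ↦ ?_
    have : η < 1 / 2 := hη.2.trans_lt (eps_lt_half _)
    exact (mul_pos (by linarith) (by linarith)).ne'
  obtain ⟨η, hη, hsum⟩ := intermediate_value_Ioo (eps_strictMono (by linarith)).le hcont
    ⟨div_lt_sum_one_div_sq (by linarith) hr, sum_one_div_sq_lt_div (by linarith) hr⟩
  exact ⟨η, hη.1, by simpa [eps] using hη.2, hsum.symm⟩
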